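/- Let W be the Wythoff swap sequence and F_k the Fibonacci numbers. Then for all k ≥ 1: W(F_{2k+1} − 1) = F_{2k+2} − 1 and W(F_{2k+1}) = F_{2k}. -/

import Mathlib

/-!
Since `φ² = φ + 1`, `U n = n + L n`, and the Binet-type identity `F_n φ = F_{n+1} - ψⁿ`
(`ψ = 1 - φ ∈ (-1, 0)`) shows that `L (F_n)` is `F_{n+1}` for odd `n` and `F_{n+1} - 1` for
even `n`. Hence `F_{2k+1} - 1 = L (F_{2k})` with `U (F_{2k}) = F_{2k+2} - 1`, and
`F_{2k+1} = U (F_{2k-1})` with `L (F_{2k-1}) = F_{2k}`; the swap property finishes.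
-/

namespace Real

open goldenRatio

lemma abs_goldenConj_lt_one : |ψ| < 1 :=
  abs_lt.mpr ⟨neg_one_lt_goldenConj, goldenConj_neg.trans one_pos⟩

lemma goldenConj_pow_mem_Ioo_of_odd {n : ℕ} (hn : Odd n) : ψ ^ n ∈ Set.Ioo (-1) 0 := by
  have habs : |ψ ^ n| < 1 := by
    rw [abs_pow]
    exact pow_lt_one₀ (abs_nonneg ψ) abs_goldenConj_lt_one (by rintro rfl; simp at hn)
  exact ⟨(abs_lt.mp habs).1, hn.pow_neg goldenConj_neg⟩

lemma goldenConj_pow_mem_Ioc_of_even {n : ℕ} (hn : Even n) : ψ ^ n ∈ Set.Ioc 0 1 := by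
  rw [← hn.pow_abs]
  exact ⟨pow_pos (abs_pos.mpr goldenConj_ne_zero) n,
    pow_le_one₀ (abs_nonneg ψ) abs_goldenConj_lt_one.le⟩

lemma fib_mul_goldenRatio (n : ℕ) : (Nat.fib n : ℝ) * φ = Nat.fib (n + 1) - ψ ^ n := by
  linarith [fib_succ_sub_goldenRatio_mul_fib n]

lemma floor_natCast_mul_goldenRatio_sq (n : ℕ) :
    ⌊(n : ℝ) * φ ^ 2⌋₊ = n + ⌊(n : ℝ) * φ⌋₊ := by
  rw [goldenRatio_sq, mul_add, mul_one,
    Nat.floor_add_natCast (mul_nonneg n.cast_nonneg goldenRatio_pos.le), add_comm]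

lemma floor_fib_mul_goldenRatio_of_odd {n : ℕ} (hn : Odd n) :
    ⌊(Nat.fib n : ℝ) * φ⌋₊ = Nat.fib (n + 1) := by
  obtain ⟨hlo, hhi⟩ := goldenConj_pow_mem_Ioo_of_odd hn
  rw [Nat.floor_eq_iff (by positivity), fib_mul_goldenRatio]
  constructor <;> linarith

lemma floor_fib_mul_goldenRatio_of_even {n : ℕ} (hn : Even n) :
    ⌊(Nat.fib n : ℝ) * φ⌋₊ = Nat.fib (n + 1) - 1 := by
  obtain ⟨hlo, hhi⟩ := goldenConj_pow_mem_Ioc_of_even hn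
  have hpos : 1 ≤ Nat.fib (n + 1) := Nat.fib_pos.mpr n.succ_pos
  rw [Nat.floor_eq_iff (by positivity), fib_mul_goldenRatio, Nat.cast_sub hpos, Nat.cast_one]
  constructor <;> linarith

lemma floor_fib_mul_goldenRatio_sq_of_odd {n : ℕ} (hn : Odd n) :
    ⌊(Nat.fib n : ℝ) * φ ^ 2⌋₊ = Nat.fib (n + 2) := by
  rw [floor_natCast_mul_goldenRatio_sq, floor_fib_mul_goldenRatio_of_odd hn, Nat.fib_add_two]

lemma floor_fib_mul_goldenRatio_sq_of_even {n : ℕ} (hn : Even n) :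
    ⌊(Nat.fib n : ℝ) * φ ^ 2⌋₊ = Nat.fib (n + 2) - 1 := by
  have hpos : 1 ≤ Nat.fib (n + 1) := Nat.fib_pos.mpr n.succ_pos
  rw [floor_natCast_mul_goldenRatio_sq, floor_fib_mul_goldenRatio_of_even hn, Nat.fib_add_two]
  omega

end Real

theorem wythoff_swap_at_odd_fibonacci_general
    (φ : ℝ) (hφ : φ = (1 + Real.sqrt 5) / 2)
    (L U : ℕ → ℕ)
    (hL : ∀ n : ℕ, L n = ⌊(n : ℝ) * φ⌋₊)
    (hU : ∀ n : ℕ, U n = ⌊(n : ℝ) * φ ^ 2⌋₊)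
    (W : ℕ → ℕ)
    (hWL : ∀ k : ℕ, 1 ≤ k → W (L k) = U k)
    (hWU : ∀ k : ℕ, 1 ≤ k → W (U k) = L k) :
    ∀ k : ℕ, 1 ≤ k →
      W (Nat.fib (2 * k + 1) - 1) = Nat.fib (2 * k + 2) - 1 ∧
      W (Nat.fib (2 * k + 1)) = Nat.fib (2 * k) := by
  intro k hk
  obtain rfl : φ = Real.goldenRatio := hφ
  have heven : Even (2 * k) := even_two_mul k
  have hodd : Odd (2 * k - 1) := Nat.Even.sub_odd (by omega) heven odd_one
  have hsucc : 2 * k - 1 + 1 = 2 * k := by omega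
  have hsucc₂ : 2 * k - 1 + 2 = 2 * k + 1 := by omega
  constructor
  · have h := hWL (Nat.fib (2 * k)) (Nat.fib_pos.mpr (by omega))
    rwa [hL, hU, Real.floor_fib_mul_goldenRatio_of_even heven,
      Real.floor_fib_mul_goldenRatio_sq_of_even heven] at h
  · have h := hWU (Nat.fib (2 * k - 1)) (Nat.fib_pos.mpr (by omega))
    rwa [hL, hU, Real.floor_fib_mul_goldenRatio_of_odd hodd,
      Real.floor_fib_mul_goldenRatio_sq_of_odd hodd, hsucc, hsucc₂] at h

/-- Values of the Wythoff swap sequence near odd-indexed Fibonacci numbers: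
for all `k ≥ 1`, `W(F_{2k+1} − 1) = F_{2k+2} − 1` and `W(F_{2k+1}) = F_{2k}`. -/
theorem wythoff_swap_at_odd_fibonacci
    (φ : ℝ) (hφ : φ = (1 + Real.sqrt 5) / 2)
    (L U : ℕ → ℕ)
    (hL : ∀ n : ℕ, L n = ⌊(n : ℝ) * φ⌋₊)
    (hU : ∀ n : ℕ, U n = ⌊(n : ℝ) * φ ^ 2⌋₊)
    (W : ℕ → ℕ) (hW0 : W 0 = 0)
    (hWL : ∀ k : ℕ, 1 ≤ k → W (L k) = U k)
    (hWU : ∀ k : ℕ, 1 ≤ k → W (U k) = L k) :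
    ∀ k : ℕ, 1 ≤ k →
      W (Nat.fib (2 * k + 1) - 1) = Nat.fib (2 * k + 2) - 1 ∧
      W (Nat.fib (2 * k + 1)) = Nat.fib (2 * k) :=
  wythoff_swap_at_odd_fibonacci_general φ hφ L U hL hU W hWL hWU
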